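/- arXiv:2007.10383 — 11 statements merged into one kernel-verified Lean document; each statement's English description precedes it below -/
import Mathlib

section
/- Let φ : R → S be an injective homomorphism of integral domains of prime characteristic p > 0 such that every element of S is algebraic over R (equivalently, the induced extension of fraction fields Frac(R) → Frac(S) is algebraic). Suppose S is a solid R-algebra and S is F-solid. Then R is F-solid. -/
/-!
The image of a `p⁻¹`-linear map `φ` on `S` is an ideal, so if `φ ≠ 0` and `S` is algebraic over
`R`, then for `x` with `f x ≠ 0` there are `c` and `r ≠ 0` with `φ c = r • x`. The map
`r' ↦ f (φ (r' • c))` on `R` is then `p⁻¹`-linear and sends `1` to `r * f x ≠ 0`.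
-/

universe u v

def IsPInvLinear {S : Type*} [CommRing S] (p : ℕ) (φ : S →+ S) : Prop :=
  ∀ a x : S, φ (a ^ p * x) = a * φ x

def pInvLinearDescent {R S : Type*} [CommRing R] [CommRing S] [Algebra R S]
    (f : S →ₗ[R] R) (φ : S →+ S) (c : S) : R →+ R :=
  f.toAddMonoidHom.comp (φ.comp (LinearMap.toSpanSingleton R S c).toAddMonoidHom)

section

variable {p : ℕ} {R S : Type*} [CommRing R] [CommRing S] [Algebra R S] {φ : S →+ S}

@[simp]
theorem pInvLinearDescent_apply (f : S →ₗ[R] R) (φ : S →+ S) (c : S) (r : R) :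
    pInvLinearDescent f φ c r = f (φ (r • c)) :=
  rfl

theorem IsPInvLinear.pInvLinearDescent (hφ : IsPInvLinear p φ) (f : S →ₗ[R] R) (c : S) :
    IsPInvLinear p (pInvLinearDescent f φ c) := by
  intro a x
  rw [pInvLinearDescent_apply, pInvLinearDescent_apply, mul_smul, Algebra.smul_def (a ^ p),
    map_pow, hφ, ← Algebra.smul_def, map_smul, smul_eq_mul]

/-- With `φ y ≠ 0`, algebraicity gives `r • x = φ y * t`, and `φ (t ^ p * y) = t * φ y`. -/
theorem IsPInvLinear.exists_apply_eq_smul [NoZeroDivisors S] [Algebra.IsAlgebraic R S]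
    (hφ : IsPInvLinear p φ) (hφ0 : φ ≠ 0) (x : S) :
    ∃ c : S, ∃ r ≠ (0 : R), φ c = r • x := by
  obtain ⟨y, hy⟩ := DFunLike.ne_iff.mp hφ0
  obtain ⟨t, r, hr, hrx⟩ := (Algebra.IsAlgebraic.isAlgebraic (R := R) (φ y)).exists_smul_eq_mul
    x (mem_nonZeroDivisors_of_ne_zero hy)
  exact ⟨t ^ p * y, r, hr, by rw [hφ, hrx, mul_comm]⟩

end

theorem fsolid_descends_along_algebraic_solid_extension_general
    (p : ℕ)
    (R : Type u) (S : Type v) [CommRing R] [IsDomain R] [CommRing S] [IsDomain S]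
    [Algebra R S]
    [Algebra.IsAlgebraic R S]
    (hsolid : ∃ f : S →ₗ[R] R, f ≠ 0)
    (hFsolidS : ∃ φ : S →+ S, (∀ a x : S, φ (a ^ p * x) = a * φ x) ∧ φ ≠ 0) :
    ∃ ψ : R →+ R, (∀ a x : R, ψ (a ^ p * x) = a * ψ x) ∧ ψ ≠ 0 := by
  obtain ⟨f, hf⟩ := hsolid
  obtain ⟨φ, hφ, hφ0⟩ := hFsolidS
  obtain ⟨x, hx⟩ := DFunLike.ne_iff.mp hf
  obtain ⟨c, r, hr, hc⟩ := IsPInvLinear.exists_apply_eq_smul (R := R) hφ hφ0 x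
  refine ⟨pInvLinearDescent f φ c, IsPInvLinear.pInvLinearDescent hφ f c, fun hψ ↦ ?_⟩
  have hψ1 : r * f x = 0 := by
    simpa [hc] using DFunLike.congr_fun hψ 1
  exact mul_ne_zero hr hx hψ1

/-- **Descent of F-solidity along generically algebraic solid extensions.**
Let `R → S` be an injective homomorphism of integral domains of prime characteristic `p`, with
every element of `S` algebraic over `R`.  If `S` is a solid `R`-algebra (there is a nonzero
`R`-linear map `S → R`) and `S` is F-solid (there is a nonzero `p⁻¹`-linear map on `S`), then
`R` is F-solid. -/
theorem fsolid_descends_along_algebraic_solid_extension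
    (p : ℕ) [Fact p.Prime]
    (R : Type u) (S : Type v) [CommRing R] [IsDomain R] [CommRing S] [IsDomain S]
    [CharP R p] [CharP S p] [Algebra R S]
    (hinj : Function.Injective (algebraMap R S))
    [Algebra.IsAlgebraic R S]
    (hsolid : ∃ f : S →ₗ[R] R, f ≠ 0)
    (hFsolidS : ∃ φ : S →+ S, (∀ a x : S, φ (a ^ p * x) = a * φ x) ∧ φ ≠ 0) :
    ∃ ψ : R →+ R, (∀ a x : R, ψ (a ^ p * x) = a * ψ x) ∧ ψ ≠ 0 :=
  fsolid_descends_along_algebraic_solid_extension_general p R S hsolid hFsolidS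
end

section
/- Let R → S be an injective homomorphism of integral domains such that every element of S is algebraic over R (equivalently, the induced extension of fraction fields Frac(R) → Frac(S) is algebraic), and let T be an S-algebra. If S is a solid R-algebra and T is a solid S-algebra, then T is a solid R-algebra. -/
universe u v w

private lemma exists_smul_mem_aux {R : Type u} {S : Type v}
    [CommRing R] [CommRing S] [IsDomain S] [Algebra R S]
    {s : S} (hs : s ≠ 0) :
    ∀ (n : ℕ) (p : Polynomial R), p.natDegree ≤ n → p ≠ 0 →
      Polynomial.aeval s p = 0 → ∃ (a : R) (c : S), a ≠ 0 ∧ algebraMap R S a = s * c := by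
  intro n
  induction n with
  | zero =>
    intro p hdeg hp heval
    -- p is a nonzero constant, but aeval s p = algebraMap (coeff 0) = 0
    have : p = Polynomial.C (p.coeff 0) := Polynomial.eq_C_of_natDegree_le_zero hdeg
    refine ⟨p.coeff 0, 0, ?_, ?_⟩
    · intro h0
      apply hp
      rw [this, h0, map_zero]
    · rw [mul_zero]
      have := heval
      rw [‹p = Polynomial.C (p.coeff 0)›] at this
      simpa using this
  | succ n ih =>
    intro p hdeg hp heval
    by_cases h0 : p.coeff 0 = 0
    · -- p = divX p * X
      have hdvd : p = p.divX * Polynomial.X := by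
        conv_lhs => rw [← Polynomial.divX_mul_X_add p]
        rw [h0, map_zero, add_zero]
      have hdivX : p.divX ≠ 0 := by
        intro h
        apply hp
        rw [hdvd, h, zero_mul]
      have heval' : Polynomial.aeval s p.divX = 0 := by
        have : Polynomial.aeval s p.divX * s = 0 := by
          have := heval
          rw [hdvd] at this
          simpa using this
        rcases mul_eq_zero.mp this with h | h
        · exact h
        · exact absurd h hs
      have hdeg' : p.divX.natDegree ≤ n := by
        have : p.divX.natDegree = p.natDegree - 1 := Polynomial.natDegree_divX_eq_natDegree_tsub_one
        have hpos : 0 < p.natDegree := by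
          rcases Nat.eq_zero_or_pos p.natDegree with h | h
          · exfalso
            apply hp
            have := Polynomial.eq_C_of_natDegree_le_zero h.le
            rw [this, h0, map_zero]
          · exact h
        omega
      exact ih p.divX hdeg' hdivX heval'
    · refine ⟨p.coeff 0, -(Polynomial.aeval s p.divX), h0, ?_⟩
      have := Polynomial.divX_mul_X_add p
      have heval2 : Polynomial.aeval s p.divX * s + algebraMap R S (p.coeff 0) = 0 := by
        have h2 := heval
        conv_lhs at h2 => rw [← this]
        simpa using h2
      have : algebraMap R S (p.coeff 0) = -(Polynomial.aeval s p.divX * s) :=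
        eq_neg_of_add_eq_zero_right heval2
      rw [this]; ring

/-- **Solidity is preserved under composition along generically algebraic extensions.**
Let `R → S` be an injective homomorphism of integral domains with every element of `S`
algebraic over `R`, and let `T` be an `S`-algebra (hence an `R`-algebra via `R → S → T`).
If `S` is a solid `R`-algebra and `T` is a solid `S`-algebra, then `T` is a solid
`R`-algebra. -/
theorem solid_comp_of_algebraic
    (R : Type u) (S : Type v) (T : Type w)
    [CommRing R] [IsDomain R] [CommRing S] [IsDomain S] [CommRing T]
    [Algebra R S] [Algebra S T] [Algebra R T] [IsScalarTower R S T]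
    (hinj : Function.Injective (algebraMap R S))
    [Algebra.IsAlgebraic R S]
    (hRS : ∃ f : S →ₗ[R] R, f ≠ 0)
    (hST : ∃ g : T →ₗ[S] S, g ≠ 0) :
    ∃ h : T →ₗ[R] R, h ≠ 0 := by
  obtain ⟨f, hf⟩ := hRS
  obtain ⟨g, hg⟩ := hST
  obtain ⟨t₀, ht₀⟩ : ∃ t, g t ≠ 0 := by
    by_contra h
    push_neg at h
    exact hg (LinearMap.ext fun t => h t)
  set s : S := g t₀ with hs_def
  -- s is algebraic over R and nonzero, so s divides some nonzero element of R
  obtain ⟨p, hp, heval⟩ := Algebra.IsAlgebraic.isAlgebraic (R := R) s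
  obtain ⟨a, c, ha, hac⟩ := exists_smul_mem_aux ht₀ p.natDegree p le_rfl hp heval
  -- get x with f x ≠ 0
  obtain ⟨x, hx⟩ : ∃ x, f x ≠ 0 := by
    by_contra h
    push_neg at h
    exact hf (LinearMap.ext fun x => h x)
  refine ⟨f.comp (g.restrictScalars R), ?_⟩
  intro hcontra
  have key : f (g ((c * x) • t₀)) = 0 := by
    have := congrArg (fun φ => φ ((c * x) • t₀)) hcontra
    simpa using this
  rw [map_smul, smul_eq_mul, ← hs_def] at key
  have : c * x * s = a • x := by
    rw [Algebra.smul_def, hac]; ring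
  rw [show (c * x) * s = c * x * s from rfl, this, map_smul, smul_eq_mul] at key
  exact mul_ne_zero ha hx key
end

section
/- Let R be a Noetherian commutative ring and I a nonzero ideal of R such that R is I-adically separated (⋂_{n≥1} Iⁿ = 0). For every R-linear map φ : R̂^I → R from the I-adic completion of R, one has φ ≠ 0 if and only if φ(1) ≠ 0. -/
universe u

open Submodule

theorem Ideal.isHausdorff_of_iInf_pow_succ_eq_bot {R : Type*} [CommRing R] {I : Ideal R}
    (h : ⨅ n : ℕ, I ^ (n + 1) = ⊥) : IsHausdorff I R := by
  refine ⟨fun x hx ↦ ?_⟩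
  have hmem : x ∈ ⨅ n : ℕ, I ^ (n + 1) :=
    Submodule.mem_iInf _ |>.mpr fun n ↦ by simpa [SModEq.zero] using hx (n + 1)
  simpa [h] using hmem

namespace AdicCompletion

variable {R M N : Type*} [CommRing R] [AddCommGroup M] [Module R M] [AddCommGroup N] [Module R N]
  {I : Ideal R}

/-- The image of `M` is dense in `M̂`: for finitely generated `I`, the kernel of
`M̂ → M ⧸ Iⁿ M` is `Iⁿ M̂`, which every linear map sends into `Iⁿ N`. -/
theorem linearMap_ext_of_isHausdorff (hI : I.FG) [IsHausdorff I N]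
    {φ ψ : AdicCompletion I M →ₗ[R] N} (h : φ ∘ₗ of I M = ψ ∘ₗ of I M) : φ = ψ := by
  refine LinearMap.ext fun x ↦ ?_
  refine IsHausdorff.eq_iff_smodEq (I := I) |>.mpr fun n ↦ ?_
  obtain ⟨m, hm⟩ := Submodule.Quotient.mk_surjective _ (eval I M n x)
  have hx : x - of I M m ∈ (I ^ n • ⊤ : Submodule R (AdicCompletion I M)) := by
    rw [pow_smul_top_eq_ker_eval hI, LinearMap.mem_ker, map_sub, eval_of, mkQ_apply, hm,
      sub_self]
  have hφψ : (φ - ψ) (x - of I M m) = φ x - ψ x := by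
    have hagree : φ (of I M m) = ψ (of I M m) := LinearMap.congr_fun h m
    rw [LinearMap.sub_apply, map_sub, map_sub, hagree, sub_sub_sub_cancel_right]
  rw [SModEq.sub_mem, ← hφψ]
  exact smul_top_le_comap_smul_top _ (φ - ψ) hx

end AdicCompletion

theorem adicCompletion_hom_ne_zero_iff_apply_one_ne_zero_general
    (R : Type u) [CommRing R] [IsNoetherianRing R] (I : Ideal R)
    (hsep : (⨅ n : ℕ, I ^ (n + 1)) = ⊥)
    (φ : AdicCompletion I R →ₗ[R] R) :
    φ ≠ 0 ↔ φ 1 ≠ 0 := by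
  refine ⟨fun hφ h1 ↦ hφ ?_, fun h1 h0 ↦ h1 (by rw [h0, LinearMap.zero_apply])⟩
  have := I.isHausdorff_of_iInf_pow_succ_eq_bot hsep
  -- `h1` typechecks as `φ (of I R 1) = 0` because `of I R 1` unfolds to `1`.
  exact AdicCompletion.linearMap_ext_of_isHausdorff (IsNoetherian.noetherian I)
    (LinearMap.ext_ring h1)

/-- **Nonvanishing at 1 of maps out of the adic completion.**
Let `R` be a Noetherian ring and `I` a nonzero ideal such that `R` is `I`-adically separated
(`⋂_{n ≥ 1} Iⁿ = 0`).  Then an `R`-linear map `φ : R̂^I → R` from the `I`-adic completion is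
nonzero if and only if `φ 1 ≠ 0`. -/
theorem adicCompletion_hom_ne_zero_iff_apply_one_ne_zero
    (R : Type u) [CommRing R] [IsNoetherianRing R] (I : Ideal R) (hI : I ≠ ⊥)
    (hsep : (⨅ n : ℕ, I ^ (n + 1)) = ⊥)
    (φ : AdicCompletion I R →ₗ[R] R) :
    φ ≠ 0 ↔ φ 1 ≠ 0 :=
  adicCompletion_hom_ne_zero_iff_apply_one_ne_zero_general R I hsep φ
end

section
/- Let R be a Noetherian commutative ring and I a nonzero ideal of R such that R is I-adically separated (⋂_{n≥1} Iⁿ = 0) but R is not I-adically complete. If φ : R̂^I → R is a nonzero R-linear map from the I-adic completion of R, then φ(1) is a zerodivisor on R (i.e., φ(1) is not a nonzerodivisor). -/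
universe u

/-!
Write `c = φ 1`. Approximating `x ∈ R̂` by `s ∈ R` modulo `Iⁿ R̂` shows `c • x = φ x` in `R̂`.
If `c` were a nonzerodivisor, it would stay one on the flat `R`-module `R̂`, so `φ` would be
injective and `R̂` a finite `R`-module. As `R̂ = R + I R̂`, Nakayama then yields `r ≡ 1 mod I` with
`r R̂ ⊆ R`; since `r` is a unit of the complete ring `R̂`, the map `R → R̂` is onto, and it is
injective by separatedness, contradicting incompleteness.
-/

open AdicCompletion

section

variable {R : Type*} [CommRing R] {I : Ideal R}

lemma SModEq.map_pow_smul_top {M N : Type*} [AddCommGroup M] [Module R M] [AddCommGroup N]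
    [Module R N] {n : ℕ} {x y : M} (h : x ≡ y [SMOD (I ^ n • ⊤ : Submodule R M)])
    (f : M →ₗ[R] N) : f x ≡ f y [SMOD (I ^ n • ⊤ : Submodule R N)] :=
  (h.map f).mono (Submodule.map_le_iff_le_comap.mpr (Submodule.smul_top_le_comap_smul_top _ f))

lemma IsHausdorff.of_iInf_pow_succ_eq_bot (h : ⨅ n : ℕ, I ^ (n + 1) = ⊥) : IsHausdorff I R := by
  refine ⟨fun x hx => ?_⟩
  have hmem : x ∈ ⨅ n : ℕ, I ^ (n + 1) := by
    simpa [Submodule.mem_iInf, SModEq.zero, smul_eq_mul, Ideal.mul_top] using fun n => hx (n + 1)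
  simpa [h] using hmem

namespace AdicCompletion

lemma exists_smodEq_of {M : Type*} [AddCommGroup M] [Module R M] (hI : I.FG)
    (x : AdicCompletion I M) (n : ℕ) :
    ∃ m : M, x ≡ of I M m [SMOD (I ^ n • ⊤ : Submodule R (AdicCompletion I M))] := by
  obtain ⟨m, hm⟩ := Submodule.Quotient.mk_surjective _ (x.val n)
  refine ⟨m, SModEq.sub_mem.mpr ?_⟩
  rw [pow_smul_top_eq_ker_eval hI, LinearMap.mem_ker, map_sub, eval_of, eval_apply]
  simp [hm]

lemma smul_eq_of_apply (hI : I.FG) (φ : AdicCompletion I R →ₗ[R] R) (x : AdicCompletion I R) :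
    φ 1 • x = of I R (φ x) := by
  refine IsHausdorff.eq_iff_smodEq (I := I) |>.mpr fun n => ?_
  obtain ⟨s, hs⟩ := exists_smodEq_of hI x n
  have hφ : φ (of I R s) = s * φ 1 := by
    rw [show of I R s = s • 1 from Algebra.algebraMap_eq_smul_one s, map_smul, smul_eq_mul]
  calc φ 1 • x ≡ φ 1 • of I R s [SMOD (I ^ n • ⊤ : Submodule R (AdicCompletion I R))] :=
        hs.smul _
    _ = of I R (φ (of I R s)) := by rw [← map_smul, smul_eq_mul, hφ, mul_comm]
    _ ≡ of I R (φ x) [SMOD (I ^ n • ⊤ : Submodule R (AdicCompletion I R))] :=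
        (hs.symm.map_pow_smul_top φ).map_pow_smul_top (of I R)

lemma injective_of_apply_one_mem_nonZeroDivisors [IsNoetherianRing R]
    (φ : AdicCompletion I R →ₗ[R] R) (hφ : φ 1 ∈ nonZeroDivisors R) : Function.Injective φ := by
  intro x y hxy
  apply Module.Flat.isSMulRegular_of_nonZeroDivisors (M := AdicCompletion I R) hφ
  simp only [smul_eq_of_apply (IsNoetherian.noetherian I) φ, hxy]

lemma of_surjective_of_finite (hI : I.FG) [Module.Finite R (AdicCompletion I R)] :
    Function.Surjective (of I R) := by
  set S := LinearMap.range (of I R)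
  have hle : (⊤ : Submodule R (AdicCompletion I R ⧸ S)) ≤ I • ⊤ := by
    rintro q -
    obtain ⟨x, rfl⟩ := S.mkQ_surjective q
    obtain ⟨s, hs⟩ := exists_smodEq_of hI x 1
    have hx : S.mkQ x = S.mkQ (x - of I R s) := by
      rw [map_sub, show S.mkQ (of I R s) = 0 from (Submodule.Quotient.mk_eq_zero S).mpr ⟨s, rfl⟩,
        sub_zero]
    rw [hx]
    refine Submodule.smul_top_le_comap_smul_top I S.mkQ ?_
    simpa using SModEq.sub_mem.mp hs
  obtain ⟨r, hr1, hr⟩ := Submodule.exists_sub_one_mem_and_smul_eq_zero_of_fg_of_le_smul I ⊤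
    Module.Finite.fg_top hle
  have hunit : IsUnit (algebraMap R (AdicCompletion I R) r) := by
    have := isAdicComplete_self I hI
    have hmem : algebraMap R (AdicCompletion I R) (r - 1) ∈ (⊥ : Ideal _).jacobson :=
      IsAdicComplete.le_jacobson_bot _ (Ideal.mem_map_of_mem _ hr1)
    simpa using Ideal.mem_jacobson_bot.mp hmem 1
  obtain ⟨u, hu⟩ := hunit.exists_right_inv
  intro x
  have hx : x = r • (u * x) := by
    rw [Algebra.smul_def, ← mul_assoc, hu, one_mul]
  obtain ⟨s, hs⟩ : r • (u * x) ∈ S := by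
    rw [← Submodule.Quotient.mk_eq_zero, ← Submodule.mkQ_apply, map_smul]
    exact hr _ Submodule.mem_top
  exact ⟨s, hs.trans hx.symm⟩

end AdicCompletion

end

theorem adicCompletion_hom_apply_one_zerodivisor_general
    (R : Type u) [CommRing R] [IsNoetherianRing R] (I : Ideal R)
    (hsep : (⨅ n : ℕ, I ^ (n + 1)) = ⊥)
    (hnotcomplete : ¬ Function.Bijective (algebraMap R (AdicCompletion I R)))
    (φ : AdicCompletion I R →ₗ[R] R) :
    φ 1 ∉ nonZeroDivisors R := by
  intro hφ
  have : IsHausdorff I R := .of_iInf_pow_succ_eq_bot hsep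
  have : IsNoetherian R (AdicCompletion I R) :=
    isNoetherian_of_injective φ (injective_of_apply_one_mem_nonZeroDivisors φ hφ)
  exact hnotcomplete ⟨of_injective I R, of_surjective_of_finite (IsNoetherian.noetherian I)⟩

/-- **Maps out of the adic completion evaluate to zerodivisors at 1.**
Let `R` be a Noetherian ring and `I` a nonzero ideal such that `R` is `I`-adically separated
(`⋂_{n ≥ 1} Iⁿ = 0`) but not `I`-adically complete (the canonical map `R → R̂^I` is not
bijective).  If `φ : R̂^I → R` is a nonzero `R`-linear map, then `φ 1` is a zerodivisor on
`R`. -/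
theorem adicCompletion_hom_apply_one_zerodivisor
    (R : Type u) [CommRing R] [IsNoetherianRing R] (I : Ideal R) (hI : I ≠ ⊥)
    (hsep : (⨅ n : ℕ, I ^ (n + 1)) = ⊥)
    (hnotcomplete : ¬ Function.Bijective (algebraMap R (AdicCompletion I R)))
    (φ : AdicCompletion I R →ₗ[R] R) (hφ : φ ≠ 0) :
    φ 1 ∉ nonZeroDivisors R :=
  adicCompletion_hom_apply_one_zerodivisor_general R I hsep hnotcomplete φ
end

section
/- Let R be a Noetherian integral domain and I a nonzero ideal of R such that R is not I-adically complete. Then the I-adic completion R̂^I is not a solid R-algebra; that is, every R-linear map R̂^I → R is zero. -/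
universe u

/-!
Density of `R` in `R̂` and the Hausdorff property force every `R`-linear `φ : R̂ → R` to satisfy
`φ x = φ 1 • x` in `R̂`. If `φ ≠ 0`, then `φ 1` is a nonzero element of the domain `R`, hence a
nonzerodivisor on the flat `R`-module `R̂`; so `φ` is injective and `R̂` is a finite `R`-module.
Nakayama applied to `R̂ / R = I • (R̂ / R)` gives `a ∈ I` with `(1 - a) R̂ ⊆ R`, and `1 - a` is a
unit of the complete ring `R̂`, so `R → R̂` is surjective; it is injective by Krull's intersection
theorem.
-/

open AdicCompletion

theorem Algebra.algebraMap_surjective_of_isUnit_of_mul_mem_bot {R A : Type*} [CommSemiring R]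
    [Semiring A] [Algebra R A] {u : A} (hu : IsUnit u) (h : ∀ x, u * x ∈ (⊥ : Subalgebra R A)) :
    Function.Surjective (algebraMap R A) := by
  obtain ⟨u, rfl⟩ := hu
  have hinv : (↑u⁻¹ : A) ∈ (⊥ : Subalgebra R A) := by
    simpa [← mul_assoc] using h (↑u⁻¹ * ↑u⁻¹)
  intro x
  exact Algebra.mem_bot.mp (by simpa [← mul_assoc] using Subalgebra.mul_mem _ hinv (h x))

namespace AdicCompletion

variable {R : Type u} [CommRing R] {I : Ideal R}

theorem exists_sub_of_mem_pow_smul_top {M : Type*} [AddCommGroup M] [Module R M] (hI : I.FG)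
    (n : ℕ) (x : AdicCompletion I M) :
    ∃ m : M, x - of I M m ∈ (I ^ n • ⊤ : Submodule R (AdicCompletion I M)) := by
  obtain ⟨m, hm⟩ := Submodule.Quotient.mk_surjective _ (x.val n)
  refine ⟨m, ?_⟩
  rw [pow_smul_top_eq_ker_eval hI, LinearMap.mem_ker, map_sub, eval_apply, eval_apply, of_apply,
    Submodule.mkQ_apply, hm, sub_self]

theorem linearMap_ext_of_comp_of {M N : Type*} [AddCommGroup M] [Module R M] [AddCommGroup N]
    [Module R N] [IsHausdorff I N] (hI : I.FG) {f g : AdicCompletion I M →ₗ[R] N}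
    (h : f ∘ₗ of I M = g ∘ₗ of I M) : f = g := by
  have hfg : (f - g) ∘ₗ of I M = 0 := by rw [LinearMap.sub_comp, h, sub_self]
  refine LinearMap.ext fun x => sub_eq_zero.mp <| IsHausdorff.haus ‹_› _ fun n => SModEq.zero.mpr ?_
  obtain ⟨m, hm⟩ := exists_sub_of_mem_pow_smul_top hI n x
  have hx : (f - g) x = (f - g) (x - of I M m) := by
    rw [map_sub, ← LinearMap.comp_apply _ (of I M), hfg, LinearMap.zero_apply, sub_zero]
  rw [← LinearMap.sub_apply, hx]
  exact Submodule.smul_top_le_comap_smul_top _ (f - g) hm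

theorem of_comp_eq_smul_id (hI : I.FG) (φ : AdicCompletion I R →ₗ[R] R) :
    of I R ∘ₗ φ = φ 1 • LinearMap.id := by
  refine linearMap_ext_of_comp_of hI (LinearMap.ext_ring ?_)
  simp only [LinearMap.comp_apply, LinearMap.smul_apply, LinearMap.id_apply]
  rw [← map_smul, smul_eq_mul, mul_one]
  rfl

theorem linearMap_injective_of_ne_zero [IsDomain R] [IsNoetherianRing R] (hI : I ≠ ⊤)
    {φ : AdicCompletion I R →ₗ[R] R} (hφ : φ ≠ 0) : Function.Injective φ := by
  have hkey := of_comp_eq_smul_id (IsNoetherian.noetherian I) φ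
  have hc : φ 1 ≠ 0 := by
    refine fun hc => hφ (LinearMap.ext fun x => ?_)
    have : IsHausdorff I R := .of_isDomain I hI
    refine of_injective I R ?_
    simpa [hc] using LinearMap.congr_fun hkey x
  have : Module.Flat R (AdicCompletion I R) := flat_of_isNoetherian I
  intro x y hxy
  refine IsSMulRegular.of_ne_zero hc ?_
  simp only [LinearMap.ext_iff, LinearMap.comp_apply, LinearMap.smul_apply,
    LinearMap.id_apply] at hkey
  exact (hkey x).symm.trans ((congrArg _ hxy).trans (hkey y))

theorem algebraMap_surjective_of_finite [Module.Finite R (AdicCompletion I R)] (hI : I.FG) :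
    Function.Surjective (algebraMap R (AdicCompletion I R)) := by
  let B := Subalgebra.toSubmodule (⊥ : Subalgebra R (AdicCompletion I R))
  have hdense : (⊤ : Submodule R (AdicCompletion I R ⧸ B)) ≤ I • ⊤ := by
    rintro q -
    obtain ⟨x, rfl⟩ := B.mkQ_surjective q
    obtain ⟨r, hr⟩ := exists_sub_of_mem_pow_smul_top hI 1 x
    rw [pow_one] at hr
    have hx : B.mkQ x = B.mkQ (x - of I R r) := by
      have hrB : of I R r ∈ B := Subalgebra.algebraMap_mem _ r
      rw [map_sub, B.mkQ_apply (of I R r), (Submodule.Quotient.mk_eq_zero B).mpr hrB, sub_zero]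
    rw [hx]
    exact Submodule.smul_top_le_comap_smul_top I B.mkQ hr
  obtain ⟨a, haI, ha⟩ := Submodule.exists_mem_and_smul_eq_self_of_fg_of_le_smul I ⊤
    (Module.Finite.fg_top) hdense
  have hunit : IsUnit (1 - algebraMap R (AdicCompletion I R) a) := by
    have := (isAdicComplete_self I hI).le_jacobson_bot _ (Ideal.mem_map_of_mem _ haI)
    simpa [sub_eq_neg_add] using Ideal.mem_jacobson_bot.mp this (-1)
  refine Algebra.algebraMap_surjective_of_isUnit_of_mul_mem_bot hunit fun x => ?_
  have hx := ha (B.mkQ x) Submodule.mem_top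
  rw [← map_smul, Submodule.mkQ_apply, Submodule.mkQ_apply, Submodule.Quotient.eq] at hx
  rw [sub_mul, one_mul, ← Algebra.smul_def]
  have hx' := B.neg_mem hx
  rwa [neg_sub] at hx'

end AdicCompletion

theorem adicCompletion_not_solid_of_domain_general
    (R : Type u) [CommRing R] [IsDomain R] [IsNoetherianRing R] (I : Ideal R)
    (hnotcomplete : ¬ Function.Bijective (algebraMap R (AdicCompletion I R)))
    (φ : AdicCompletion I R →ₗ[R] R) :
    φ = 0 := by
  by_contra hφ
  have hI : I ≠ ⊤ := by
    rintro rfl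
    have : Subsingleton (AdicCompletion ⊤ R) :=
      (inferInstance : IsHausdorff (⊤ : Ideal R) (AdicCompletion (⊤ : Ideal R) R)).subsingleton
    exact hφ (Subsingleton.elim _ _)
  have : IsHausdorff I R := .of_isDomain I hI
  have : Module.Finite R (AdicCompletion I R) :=
    .of_injective φ (linearMap_injective_of_ne_zero hI hφ)
  exact hnotcomplete ⟨of_injective I R, algebraMap_surjective_of_finite (IsNoetherian.noetherian I)⟩

/-- **The adic completion of a non-complete Noetherian domain is not solid.**
Let `R` be a Noetherian integral domain and `I` a nonzero ideal such that `R` is not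
`I`-adically complete (the canonical map `R → R̂^I` is not bijective).  Then every `R`-linear
map `R̂^I → R` is zero. -/
theorem adicCompletion_not_solid_of_domain
    (R : Type u) [CommRing R] [IsDomain R] [IsNoetherianRing R] (I : Ideal R) (hI : I ≠ ⊥)
    (hnotcomplete : ¬ Function.Bijective (algebraMap R (AdicCompletion I R)))
    (φ : AdicCompletion I R →ₗ[R] R) :
    φ = 0 :=
  adicCompletion_not_solid_of_domain_general R I hnotcomplete φ
end

section
/- Let R be a Noetherian commutative ring and I an ideal of R. For every R-linear map φ : R̂^I → R from the I-adic completion of R, the image of the multiplication-by-φ(1) map on R̂^I lands in the image of the canonical map; that is, for every x ∈ R̂^I there exists r ∈ R with φ(1)·x = i(r), where i : R → R̂^I is the canonical map. -/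
/-!
The witness is `r = φ x`. Both `x ↦ φ 1 • x` and `x ↦ φ x • 1` are `R`-linear endomorphisms of
`R̂^I`, and they agree on the image of `R` because `φ (i r) = r * φ 1`. The image of `R` is
`I`-adically dense (for finitely generated `I` the kernel of `R̂^I → R ⧸ Iⁿ` is `Iⁿ R̂^I`), linear
maps preserve `Iⁿ • ⊤`, and `R̂^I` is `I`-adically Hausdorff, so the two maps coincide.
-/

universe u

open Submodule

theorem IsHausdorff.linearMap_ext_of_forall_exists_sub_mem {R M N : Type*} [CommRing R]
    {I : Ideal R} [AddCommGroup M] [Module R M] [AddCommGroup N] [Module R N] [IsHausdorff I N]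
    {S : Set M} (hS : ∀ (x : M) (n : ℕ), ∃ s ∈ S, x - s ∈ (I ^ n • ⊤ : Submodule R M))
    {f g : M →ₗ[R] N} (h : Set.EqOn f g S) : f = g := by
  ext x
  refine (IsHausdorff.eq_iff_smodEq (I := I)).mpr fun n ↦ SModEq.sub_mem.mpr ?_
  obtain ⟨s, hs, hxs⟩ := hS x n
  have hfg : (f - g) (x - s) = f x - g x := by
    simp only [LinearMap.sub_apply, map_sub, h hs]
    abel
  exact hfg ▸ smul_top_le_comap_smul_top (I ^ n) (f - g) hxs

theorem AdicCompletion.exists_sub_of_mem_pow_smul_top_s12 {R M : Type*} [CommRing R] {I : Ideal R}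
    [AddCommGroup M] [Module R M] (hI : I.FG) (x : AdicCompletion I M) (n : ℕ) :
    ∃ m : M, x - of I M m ∈ (I ^ n • ⊤ : Submodule R (AdicCompletion I M)) := by
  obtain ⟨m, hm⟩ := Submodule.Quotient.mk_surjective _ (eval I M n x)
  refine ⟨m, ?_⟩
  rw [pow_smul_top_eq_ker_eval hI, LinearMap.mem_ker, map_sub, eval_of, ← hm, mkQ_apply, sub_self]

/-- **Multiplication by `φ 1` maps the adic completion into the image of `R`.**
Let `R` be a Noetherian ring and `I` an ideal.  For every `R`-linear map `φ : R̂^I → R` from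
the `I`-adic completion and every `x ∈ R̂^I`, there exists `r ∈ R` with
`φ 1 • x = i r`, where `i : R → R̂^I` is the canonical map. -/
theorem adicCompletion_hom_apply_one_mul_mem_range
    (R : Type u) [CommRing R] [IsNoetherianRing R] (I : Ideal R)
    (φ : AdicCompletion I R →ₗ[R] R) (x : AdicCompletion I R) :
    ∃ r : R, φ 1 • x = algebraMap R (AdicCompletion I R) r := by
  have hdense (y : AdicCompletion I R) (n : ℕ) :
      ∃ s ∈ Set.range (algebraMap R (AdicCompletion I R)), y - s ∈ (I ^ n • ⊤ : Submodule R _) :=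
    let ⟨r, hr⟩ := AdicCompletion.exists_sub_of_mem_pow_smul_top_s12 (IsNoetherian.noetherian I) y n
    ⟨_, ⟨r, rfl⟩, hr⟩
  have hagree : Set.EqOn (φ 1 • LinearMap.id : AdicCompletion I R →ₗ[R] _) (φ.smulRight 1)
      (Set.range (algebraMap R (AdicCompletion I R))) := by
    rintro _ ⟨r, rfl⟩
    simp [Algebra.algebraMap_eq_smul_one, smul_smul]
  have hmaps := IsHausdorff.linearMap_ext_of_forall_exists_sub_mem hdense hagree
  exact ⟨φ x, by simpa [Algebra.algebraMap_eq_smul_one] using LinearMap.congr_fun hmaps x⟩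
end

section
/- Let R be a Noetherian integral domain with fraction field K, and let R⁺ be the integral closure of R in an algebraic closure of K. If R⁺ is a solid R-algebra, then R is a Japanese ring: for every finite field extension L of K, the integral closure of R in L is a finitely generated R-module. -/
/-!
Fix a nonzero `R`-linear map `f : R⁺ → R`, pick `ω` with `f ω ≠ 0` and embed `L` into the
algebraic closure over `K`. Then `λ c = f (ω c)` is an `R`-linear form on the integral closure
`B` of `R` in `L` with `λ 1 ≠ 0`. If `b₁, …, bₙ` is a `K`-basis of `L` made of integral elements,
the map `c ↦ (λ (c bᵢ))ᵢ` embeds `B` into `Rⁿ`: for `c ≠ 0`, clearing denominators in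
`c⁻¹ = ∑ kᵢ bᵢ` gives `s = ∑ aᵢ c bᵢ` with `0 ≠ s ∈ R`, so `s λ(1) = ∑ aᵢ λ(c bᵢ)` cannot vanish.
As `R` is Noetherian, `B` is then a finitely generated `R`-module.
-/

open scoped nonZeroDivisors

universe u

theorem exists_linearMap_map_one_ne_zero_of_algHom {R A S : Type*} [CommSemiring R]
    [Semiring A] [Semiring S] [Algebra R A] [Algebra R S] (φ : A →ₐ[R] S) {f : S →ₗ[R] R}
    (hf : f ≠ 0) : ∃ g : A →ₗ[R] R, g 1 ≠ 0 := by
  obtain ⟨ω, hω⟩ : ∃ ω, f ω ≠ 0 := by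
    by_contra! h
    exact hf (LinearMap.ext h)
  exact ⟨f ∘ₗ LinearMap.mulLeft R ω ∘ₗ φ.toLinearMap, by simpa using hω⟩

section Basis

variable {R K L : Type*} [CommRing R] [Field K] [Algebra R K] [IsFractionRing R K]
  [Field L] [Algebra K L] [Algebra R L] [IsScalarTower R K L] {ι : Type*} [Fintype ι]

theorem exists_algebraMap_eq_sum_smul_mul (b : Module.Basis ι K L) {c : L} (hc : c ≠ 0) :
    ∃ s ∈ R⁰, ∃ a : ι → R, algebraMap R L s = ∑ i, a i • (c * b i) := by
  obtain ⟨s, hs⟩ := IsLocalization.exist_integer_multiples_of_finite R⁰ (b.repr c⁻¹)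
  choose a ha using hs
  refine ⟨s, s.2, a, ?_⟩
  calc algebraMap R L s = c * ((s : R) • ∑ i, b.repr c⁻¹ i • b i) := by
        rw [b.sum_repr, mul_smul_comm, mul_inv_cancel₀ hc, Algebra.algebraMap_eq_smul_one]
    _ = ∑ i, a i • (c * b i) := by
        simp only [Finset.smul_sum, Finset.mul_sum, ← smul_assoc, ← ha,
          algebraMap_smul, mul_smul_comm]

variable [IsDomain R]

theorem injective_pi_comp_mulRight {B : Subalgebra R L} {g : B →ₗ[R] R} (hg : g 1 ≠ 0)
    (b : Module.Basis ι K L) (hb : ∀ i, b i ∈ B) :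
    Function.Injective (LinearMap.pi fun i ↦ g ∘ₗ LinearMap.mulRight R ⟨b i, hb i⟩) := by
  refine (injective_iff_map_eq_zero _).2 fun c hc ↦ ?_
  by_contra hc0
  obtain ⟨s, hs, a, hsum⟩ :=
    exists_algebraMap_eq_sum_smul_mul (R := R) b (c := (c : L)) (by simpa using hc0)
  have hsumB : algebraMap R B s = ∑ i, a i • (c * ⟨b i, hb i⟩) := Subtype.ext (by simpa using hsum)
  have hvanish : ∀ i, g (c * ⟨b i, hb i⟩) = 0 := fun i ↦ congrFun hc i
  have : s * g 1 = 0 := by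
    rw [← smul_eq_mul, ← map_smul, ← Algebra.algebraMap_eq_smul_one, hsumB]
    simp [hvanish]
  exact mul_ne_zero (nonZeroDivisors.ne_zero hs) hg this

end Basis

/-- **Solidity of the absolute integral closure implies the Japanese property.**
Let `R` be a Noetherian integral domain with fraction field `K`, let `Ω` be an algebraic
closure of `K`, and let `R⁺ = integralClosure R Ω` be the absolute integral closure of `R`.
If `R⁺` is a solid `R`-algebra (there is a nonzero `R`-linear map `R⁺ → R`), then `R` is
Japanese: for every finite field extension `L` of `K`, the integral closure of `R` in `L` is
a finitely generated `R`-module. -/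
theorem japanese_of_absolute_integral_closure_solid
    (R : Type u) [CommRing R] [IsDomain R] [IsNoetherianRing R]
    (K : Type u) [Field K] [Algebra R K] [IsFractionRing R K]
    (Ω : Type u) [Field Ω] [Algebra K Ω] [IsAlgClosure K Ω]
    [Algebra R Ω] [IsScalarTower R K Ω]
    (hsolid : ∃ f : integralClosure R Ω →ₗ[R] R, f ≠ 0) :
    ∀ (L : Type u) [Field L] [Algebra K L] [Algebra R L] [IsScalarTower R K L],
      FiniteDimensional K L → Module.Finite R (integralClosure R L) := by
  intro L _ _ _ _ _
  obtain ⟨f, hf⟩ := hsolid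
  have : IsAlgClosed Ω := IsAlgClosure.isAlgClosed K
  let embedding : L →ₐ[R] Ω := (IsAlgClosed.lift (R := K) (M := Ω)).restrictScalars R
  obtain ⟨g, hg⟩ := exists_linearMap_map_one_ne_zero_of_algHom embedding.mapIntegralClosure hf
  obtain ⟨s, b, hb⟩ := FiniteDimensional.exists_is_basis_integral R K L
  exact Module.Finite.of_injective _ (injective_pi_comp_mulRight hg b hb)
end

section
/- Let R be a Noetherian integral domain of prime characteristic p > 0 with fraction field K. Suppose R is generically F-finite, i.e., the Frobenius endomorphism x ↦ x^p of K is a finite ring homomorphism ([K : K^p] < ∞), and suppose the absolute integral closure R⁺ is a solid R-algebra. Then R is F-finite, i.e., the Frobenius endomorphism x ↦ x^p of R is a finite ring homomorphism (hence, by Kunz's theorem, R is excellent). -/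
universe u

lemma lemA {A B : Type*} [CommRing A] [CommRing B] (f : A →+* B) (hf : f.Finite) :
    ∃ (n : ℕ) (g : Fin n → B), ∀ b : B, ∃ c : Fin n → A, b = ∑ i, f (c i) * g i := by
  letI : Algebra A B := f.toAlgebra
  haveI : Module.Finite A B := hf
  obtain ⟨n, g, hg⟩ := Module.Finite.exists_fin (R := A) (M := B)
  refine ⟨n, g, fun b => ?_⟩
  have hb : b ∈ Submodule.span A (Set.range g) := hg ▸ Submodule.mem_top
  rw [Submodule.mem_span_range_iff_exists_fun] at hb
  obtain ⟨c, hc⟩ := hb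
  exact ⟨c, by rw [← hc]; exact Finset.sum_congr rfl fun i _ => (Algebra.smul_def _ _)⟩

lemma lemB {A B : Type*} [CommRing A] [CommRing B] [IsNoetherianRing A] (f : A →+* B)
    (n : ℕ) (Φ : B →+ (Fin n → A)) (hinj : Function.Injective Φ)
    (hsemi : ∀ (a : A) (x : B), Φ (f a * x) = a • Φ x) : f.Finite := by
  letI : Algebra A B := f.toAlgebra
  show Module.Finite A B
  let L : B →ₗ[A] (Fin n → A) :=
    { toFun := Φ
      map_add' := Φ.map_add
      map_smul' := fun a x => by
        simp only [RingHom.id_apply]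
        rw [Algebra.smul_def, RingHom.algebraMap_toAlgebra, hsemi] }
  exact Module.Finite.of_injective L hinj

/-- **Generically F-finite domains with solid absolute integral closure are F-finite.**
Let `R` be a Noetherian integral domain of prime characteristic `p` with fraction field `K`,
let `Ω` be an algebraic closure of `K` and `R⁺ = integralClosure R Ω`.  If the Frobenius of
`K` is a finite ring homomorphism (`R` is generically F-finite) and `R⁺` is a solid
`R`-algebra, then the Frobenius of `R` is a finite ring homomorphism, i.e. `R` is
F-finite. -/
theorem ffinite_of_generically_ffinite_and_plus_solid
    (p : ℕ) [Fact p.Prime]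
    (R : Type u) [CommRing R] [IsDomain R] [IsNoetherianRing R] [CharP R p]
    (K : Type u) [Field K] [Algebra R K] [IsFractionRing R K] [CharP K p]
    (Ω : Type u) [Field Ω] [Algebra K Ω] [IsAlgClosure K Ω]
    [Algebra R Ω] [IsScalarTower R K Ω]
    (hgenFfin : (frobenius K p).Finite)
    (hsolid : ∃ f : integralClosure R Ω →ₗ[R] R, f ≠ 0) :
    (frobenius R p).Finite := by
  have hp1 : p - 1 + 1 = p := Nat.succ_pred_eq_of_pos (Fact.out : p.Prime).pos
  have hp0 : p ≠ 0 := (Fact.out : p.Prime).ne_zero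
  obtain ⟨φ, hφ⟩ := hsolid
  obtain ⟨t, ht⟩ : ∃ t, φ t ≠ 0 := by
    by_contra h; push_neg at h
    exact hφ (LinearMap.ext fun a => h a)
  haveI : CharP Ω p := charP_of_injective_algebraMap (algebraMap K Ω).injective p
  haveI : IsAlgClosed Ω := IsAlgClosure.isAlgClosed K
  -- the inverse-Frobenius embedding  x ↦ x^{1/p}  of R into Ω
  let e : R →+* Ω := ((frobeniusEquiv Ω p).symm : Ω →+* Ω).comp (algebraMap R Ω)
  have he : ∀ x : R, e x ^ p = algebraMap R Ω x := fun x =>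
    frobeniusEquiv_symm_pow_p Ω p (algebraMap R Ω x)
  have heA : ∀ x : R, e x ∈ integralClosure R Ω := by
    intro x
    refine ⟨Polynomial.X ^ p - Polynomial.C x, Polynomial.monic_X_pow_sub_C x hp0, ?_⟩
    simp [Polynomial.eval₂_sub, he x]
  let E : R →+* integralClosure R Ω :=
    { toFun := fun x => ⟨e x, heA x⟩
      map_one' := Subtype.ext (map_one e)
      map_mul' := fun x y => Subtype.ext (map_mul e x y)
      map_zero' := Subtype.ext (map_zero e)
      map_add' := fun x y => Subtype.ext (map_add e x y) }
  have hEp : ∀ a : R, E (a ^ p) = algebraMap R (integralClosure R Ω) a := by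
    intro a
    refine Subtype.ext ?_
    show e (a ^ p) = _
    rw [map_pow, he a]
    simp
  -- a finite spanning set, with entries from R
  obtain ⟨n, g0, hg0⟩ := lemA (frobenius K p) hgenFfin
  have hGex : ∃ G : Fin n → R, ∀ k : K, ∃ c : Fin n → K,
      k = ∑ i, (c i) ^ p * algebraMap R K (G i) := by
    have hsur := fun i => IsFractionRing.div_surjective (A := R) (g0 i)
    choose a b hb hdiv using hsur
    have hbne : ∀ i, algebraMap R K (b i) ≠ 0 := fun i =>
      IsFractionRing.to_map_ne_zero_of_mem_nonZeroDivisors (hb i)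
    refine ⟨fun i => a i * b i ^ (p - 1), fun k => ?_⟩
    obtain ⟨c, hc⟩ := hg0 k
    refine ⟨fun i => c i / algebraMap R K (b i), ?_⟩
    rw [hc]
    refine Finset.sum_congr rfl fun i _ => ?_
    have hbp : algebraMap R K (b i) ^ p
        = algebraMap R K (b i) ^ (p - 1) * algebraMap R K (b i) := by
      rw [← pow_succ, hp1]
    have hB := hbne i
    rw [frobenius_def, ← hdiv i, map_mul, map_pow, div_pow, hbp, div_mul_eq_mul_div,
      ← mul_div_assoc, div_eq_div_iff hB (mul_ne_zero (pow_ne_zero _ hB) hB)]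
    ring
  obtain ⟨G, hG⟩ := hGex
  -- the semilinear pairing map
  let Φ : R →+ (Fin n → R) :=
    { toFun := fun x i => φ (t * E (G i) * E x)
      map_zero' := by
        funext i
        show φ (t * E (G i) * E 0) = 0
        rw [map_zero E, mul_zero, map_zero]
      map_add' := fun x y => by
        funext i
        show φ (t * E (G i) * E (x + y)) = φ (t * E (G i) * E x) + φ (t * E (G i) * E y)
        rw [map_add E, mul_add, map_add] }
  have hsemi : ∀ (a : R) (x : R), Φ (frobenius R p a * x) = a • Φ x := by
    intro a x
    funext i
    show φ (t * E (G i) * E (a ^ p * x)) = (a • fun j => φ (t * E (G j) * E x)) i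
    rw [map_mul E, hEp a]
    have : t * E (G i) * (algebraMap R (integralClosure R Ω) a * E x)
        = a • (t * E (G i) * E x) := by
      rw [Algebra.smul_def]; ring
    rw [this, map_smul]
    simp [smul_eq_mul]
  have hinj : Function.Injective Φ := by
    rw [injective_iff_map_eq_zero]
    intro x hx
    by_contra hx0
    have hcomp : ∀ i, φ (t * E (G i) * E x) = 0 := fun i => congrFun hx i
    obtain ⟨c, hc⟩ := hG ((algebraMap R K x) ^ (p - 1))
    obtain ⟨b, hb⟩ := IsLocalization.exist_integer_multiples (nonZeroDivisors R) Finset.univ c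
    choose aa haa using fun i => hb i (Finset.mem_univ i)
    -- equation in K, then in R
    have hK : algebraMap R K ((b : R) ^ p * x ^ (p - 1))
        = algebraMap R K (∑ i, (aa i) ^ p * G i) := by
      rw [map_mul, map_pow, map_pow, map_sum, hc, Finset.mul_sum]
      refine Finset.sum_congr rfl fun i _ => ?_
      rw [map_mul, map_pow, haa i, Algebra.smul_def, mul_pow]
      ring
    have hR : (b : R) ^ p * x ^ (p - 1) = ∑ i, (aa i) ^ p * G i :=
      IsFractionRing.injective R K hK
    have hxp : x ^ (p - 1) * x = x ^ p := by rw [← pow_succ, hp1]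
    have h1 : ((b : R) * x) ^ p = ∑ i, (aa i) ^ p * (G i * x) := by
      rw [mul_pow, ← hxp, ← mul_assoc, hR, Finset.sum_mul]
      exact Finset.sum_congr rfl fun i _ => mul_assoc _ _ _
    have hA : algebraMap R (integralClosure R Ω) ((b : R) * x)
        = ∑ i, algebraMap R (integralClosure R Ω) (aa i) * (E (G i) * E x) := by
      rw [← hEp ((b : R) * x), h1, map_sum]
      exact Finset.sum_congr rfl fun i _ => by rw [map_mul E, hEp, map_mul E]
    have h2 : ((b : R) * x) • t = ∑ i, (aa i) • (t * E (G i) * E x) := by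
      simp only [Algebra.smul_def]
      rw [hA, Finset.sum_mul]
      exact Finset.sum_congr rfl fun i _ => by ring
    have h3 := congrArg φ h2
    rw [map_smul, map_sum] at h3
    simp only [map_smul, hcomp, smul_zero, smul_eq_mul, mul_zero, Finset.sum_const_zero] at h3
    have hb0 : (b : R) ≠ 0 := nonZeroDivisors.coe_ne_zero b
    exact (mul_ne_zero (mul_ne_zero hb0 hx0) ht) h3
  exact lemB (frobenius R p) n Φ hinj hsemi
end

section
/- Let R be a commutative ring of prime characteristic p > 0. If R is F-pure regular, then for every nonzerodivisor c ∈ R there exists an integer e > 0 such that for every maximal ideal m of R, c does not belong to m^{[p^e]}, the ideal of R generated by the p^e-th powers of the elements of m. -/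
universe u v w

/-- `S` viewed as a module over itself via the `e`-th iterate of the Frobenius:
`a • x = a ^ (p ^ e) * x`.  This is the module `F^e_* S`. -/
def Frob (S : Type u) (_p _e : ℕ) : Type u := S

namespace Frob

variable {S : Type u} [CommRing S] {p e : ℕ}

instance : CommRing (Frob S p e) := inferInstanceAs (CommRing S)

/-- The identity map of `S`, viewed as a map `S → F^e_* S`. -/
def of : S → Frob S p e := id

/-- The identity map of `S`, viewed as a map `F^e_* S → S`. -/
def toBase : Frob S p e → S := id

/-- The `e`-th iterate of the Frobenius, `x ↦ x ^ (p ^ e)`, as a ring homomorphism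
`S →+* F^e_* S`. -/
def frobeniusTo (S : Type u) [CommRing S] (p e : ℕ) [Fact p.Prime] [CharP S p] :
    S →+* Frob S p e := (iterateFrobenius S p e : S →+* S)

instance [Fact p.Prime] [CharP S p] : Module S (Frob S p e) :=
  Module.compHom (Frob S p e) (frobeniusTo S p e)

@[simp] lemma smul_def [Fact p.Prime] [CharP S p] (a : S) (x : Frob S p e) :
    a • x = of (a ^ p ^ e * toBase x) := rfl

end Frob

/-- A map of `R`-modules is pure if tensoring with any `R`-module preserves injectivity. -/
def IsPure {R : Type u} [CommRing R] {M : Type v} {N : Type w} [AddCommGroup M] [Module R M]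
    [AddCommGroup N] [Module R N] (f : M →ₗ[R] N) : Prop :=
  ∀ (P : Type u) [AddCommGroup P] [Module R P], Function.Injective (LinearMap.lTensor P f)

/-- The `S`-linear map `λ^e_c : S → F^e_* S` sending `1` to `c`; as a map of sets it is
`x ↦ x ^ (p ^ e) * c`. -/
def lambdaMap (S : Type u) [CommRing S] (p : ℕ) [Fact p.Prime] [CharP S p] (e : ℕ) (c : S) :
    S →ₗ[S] Frob S p e where
  toFun x := Frob.of (x ^ p ^ e * c)
  map_add' x y := by
    show Frob.of ((x + y) ^ p ^ e * c) = Frob.of (x ^ p ^ e * c + y ^ p ^ e * c)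
    rw [add_pow_char_pow, add_mul]
  map_smul' a x := by
    show Frob.of ((a * x) ^ p ^ e * c) = a • Frob.of (x ^ p ^ e * c)
    rw [Frob.smul_def]
    show Frob.of ((a * x) ^ p ^ e * c) = Frob.of (a ^ p ^ e * (x ^ p ^ e * c))
    rw [mul_pow, mul_assoc]


/-!
If `c ∈ 𝔪^{[q]}` with `q = p ^ e`, write `c = ∑ aᵢ xᵢ ^ q` with `xᵢ ∈ 𝔪`; in `F^e_* R` this reads
`c = ∑ xᵢ • aᵢ`, so `c ∈ 𝔪 • F^e_* R`. Tensoring `λ^e_c` with `R ⧸ 𝔪` then sends the nonzero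
element `1 ⊗ 1` of `R ⧸ 𝔪 ⊗ R ≅ R ⧸ 𝔪` to `1 ⊗ c`, which is zero in
`R ⧸ 𝔪 ⊗ F^e_* R ≅ F^e_* R ⧸ 𝔪 • F^e_* R`, so `λ^e_c` is not pure. Nonzerodivisors avoid all
minimal primes, so F-pure regularity applies to `c`.
-/

open TensorProduct in
theorem IsPure.apply_one_notMem_smul_top {R : Type u} [CommRing R] {N : Type w}
    [AddCommGroup N] [Module R N] {f : R →ₗ[R] N} (hf : IsPure f) {I : Ideal R} (hI : I ≠ ⊤) :
    f 1 ∉ I • (⊤ : Submodule R N) := by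
  intro h
  have : Nontrivial (R ⧸ I) := Ideal.Quotient.nontrivial_iff.mpr hI
  have hvanish : (1 : R ⧸ I) ⊗ₜ[R] f 1 = 0 := by
    rw [← (quotTensorEquivQuotSMul N I).map_eq_zero_iff, quotTensorEquivQuotSMul_mk_one_tmul,
      Submodule.Quotient.mk_eq_zero]
    exact h
  have hone : (1 : R ⧸ I) ⊗ₜ[R] (1 : R) = 0 :=
    hf (R ⧸ I) (by rw [LinearMap.lTensor_tmul, hvanish, map_zero])
  simpa using congrArg (TensorProduct.rid R (R ⧸ I)) hone

theorem Frob.of_mem_smul_top_of_mem_span_image_pow {S : Type u} [CommRing S] {p e : ℕ}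
    [Fact p.Prime] [CharP S p] {I : Ideal S} {c : S}
    (hc : c ∈ Ideal.span ((fun x => x ^ p ^ e) '' (I : Set S))) :
    (Frob.of c : Frob S p e) ∈ I • (⊤ : Submodule S (Frob S p e)) := by
  obtain ⟨n, a, g, rfl⟩ := Submodule.mem_span_set'.mp hc
  show ∑ i, (Frob.of (a i * g i) : Frob S p e) ∈ _
  refine Submodule.sum_mem _ fun i _ => ?_
  obtain ⟨x, hx, hxg⟩ := (g i).2
  have hterm : (Frob.of (a i * g i) : Frob S p e) = x • Frob.of (a i) := by
    rw [Frob.smul_def, ← hxg]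
    exact congrArg Frob.of (mul_comm _ _)
  rw [hterm]
  exact Submodule.smul_mem_smul hx trivial

@[simp]
theorem lambdaMap_one (S : Type u) [CommRing S] (p : ℕ) [Fact p.Prime] [CharP S p] (e : ℕ)
    (c : S) : lambdaMap S p e c 1 = Frob.of c := by
  show Frob.of (1 ^ p ^ e * c) = Frob.of c
  rw [one_pow, one_mul]

/-- **F-pure regularity implies avoidance of Frobenius powers of maximal ideals.**
Let `R` be a commutative ring of prime characteristic `p`.  If `R` is F-pure regular (for
every `c` not in any minimal prime there is `e ≥ 1` with `λ^e_c : R → F^e_* R` pure), then for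
every nonzerodivisor `c ∈ R` there is an `e ≥ 1` such that `c ∉ 𝔪^{[p^e]}` for every maximal
ideal `𝔪`, where `𝔪^{[p^e]}` is the ideal generated by the `p^e`-th powers of elements of
`𝔪`. -/
theorem fpure_regular_implies_not_mem_frobenius_power
    (p : ℕ) [Fact p.Prime]
    (R : Type u) [CommRing R] [CharP R p]
    (hFpureRegular : ∀ c : R, (∀ P ∈ minimalPrimes R, c ∉ P) →
      ∃ e : ℕ, 1 ≤ e ∧ IsPure (lambdaMap R p e c)) :
    ∀ c ∈ nonZeroDivisors R, ∃ e : ℕ, 0 < e ∧ ∀ m : Ideal R, m.IsMaximal →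
      c ∉ Ideal.span ((fun x => x ^ p ^ e) '' (m : Set R)) := by
  intro c hc
  obtain ⟨e, he, hpure⟩ := hFpureRegular c fun P hP hcP =>
    notMem_nonZeroDivisors_of_mem_mem_minimalPrimes hcP hP hc
  refine ⟨e, he, fun m hm hcm => hpure.apply_one_notMem_smul_top hm.ne_top ?_⟩
  rw [lambdaMap_one]
  exact Frob.of_mem_smul_top_of_mem_span_image_pow hcm
end

section
/- Let R be a Dedekind domain of prime characteristic p > 0. Then R is F-pure regular: for every nonzero c ∈ R there exists an integer e ≥ 1 such that the R-linear map λ^e_c : R → F^e_*R sending 1 to c is a pure map of R-modules. -/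
/-! Since `R` is a Dedekind domain, the cokernel of the injective map `λ^e_c` is flat as soon as
it is torsion-free, and an injective map with flat cokernel is pure. Torsion-freeness amounts to:
if `a ≠ 0` and `a^q x = b^q c` with `q = p^e` larger than the number of prime factors of `(c)`,
then `x = d^q c` for some `d`. Comparing multiplicities in `(a)^q (x) = (b)^q (c)` shows that each
prime occurs in `(x)` at least as often as in `(c)`, so `x = c t`; then `a^q t = b^q` forces
`a ∣ b` because `R` is integrally closed, and `t = (b / a)^q`. -/

universe u v w

open UniqueFactorizationMonoid

lemma Nat.le_of_mul_add_eq_mul_add {q a b i j : ℕ} (hi : i < q) (h : q * a + j = q * b + i) :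
    i ≤ j := by
  by_contra! hji
  have hmod := congrArg (· % q) h
  simp only [Nat.mul_add_mod, Nat.mod_eq_of_lt hi, Nat.mod_eq_of_lt (hji.trans hi)] at hmod
  omega

theorem dvd_of_pow_mul_eq_pow_mul {α : Type*} [CommMonoidWithZero α] [NormalizationMonoid α]
    [UniqueFactorizationMonoid α] {a b c x : α} {q : ℕ} (ha : a ≠ 0)
    (hq : Multiset.card (normalizedFactors c) < q) (h : a ^ q * x = b ^ q * c) : c ∣ x := by
  classical
  rcases eq_or_ne x 0 with rfl | hx
  · exact dvd_zero c
  obtain ⟨hb, hc⟩ := mul_ne_zero_iff.mp (h ▸ mul_ne_zero (pow_ne_zero q ha) hx)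
  rw [dvd_iff_normalizedFactors_le_normalizedFactors hc hx, Multiset.le_iff_count]
  intro P
  have hcount := congrArg (fun y => (normalizedFactors y).count P) h
  simp only [normalizedFactors_mul (pow_ne_zero q ha) hx, normalizedFactors_mul hb hc,
    normalizedFactors_pow, Multiset.count_add, Multiset.count_nsmul] at hcount
  exact Nat.le_of_mul_add_eq_mul_add ((Multiset.count_le_card P _).trans_lt hq) hcount

theorem IsDedekindDomain.exists_eq_pow_mul_of_pow_mul_eq_pow_mul {R : Type*} [CommRing R]
    [IsDedekindDomain R] {a b c x : R} {q : ℕ} (ha : a ≠ 0)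
    (hq : Multiset.card (normalizedFactors (Ideal.span {c})) < q) (h : a ^ q * x = b ^ q * c) :
    ∃ d, x = d ^ q * c := by
  have hspan : Ideal.span {a} ^ q * Ideal.span {x} = Ideal.span {b} ^ q * Ideal.span {c} := by
    simp only [Ideal.span_singleton_pow, Ideal.span_singleton_mul_span_singleton, h]
  obtain ⟨t, rfl⟩ : c ∣ x := Ideal.span_singleton_le_span_singleton.mp
    (Ideal.le_of_dvd (dvd_of_pow_mul_eq_pow_mul (by simpa using ha) hq hspan))
  rcases eq_or_ne c 0 with rfl | hc
  · exact ⟨0, by simp⟩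
  have hq0 : q ≠ 0 := by omega
  have hab : a ^ q * t = b ^ q := mul_left_cancel₀ hc (by linear_combination h)
  obtain ⟨d, rfl⟩ : a ∣ b := (IsIntegrallyClosed.pow_dvd_pow_iff hq0).mp ⟨t, hab.symm⟩
  have ht : t = d ^ q := mul_left_cancel₀ (pow_ne_zero q ha) (by rw [hab, mul_pow])
  exact ⟨d, by rw [ht, mul_comm]⟩

theorem isPure_of_injective_of_flat_cokernel {R : Type u} [CommRing R] {M : Type v} {N : Type w}
    [AddCommGroup M] [Module R M] [AddCommGroup N] [Module R N] {f : M →ₗ[R] N}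
    (hf : Function.Injective f) [Module.Flat R (N ⧸ LinearMap.range f)] : IsPure f :=
  fun P _ _ => LinearMap.lTensor_injective_of_exact_of_flat _ (Submodule.mkQ_surjective _) f hf
    (LinearMap.exact_map_mkQ_range f) P

section lambdaMap

variable {R : Type u} [CommRing R] {p : ℕ} [Fact p.Prime] [CharP R p] {e : ℕ} {c : R}

theorem lambdaMap_injective [IsReduced R] (hc : IsRightRegular c) :
    Function.Injective (lambdaMap R p e c) :=
  fun _ _ h => iterateFrobenius_inj R p e (hc h)

theorem isTorsionFree_cokernel_lambdaMap [IsDedekindDomain R]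
    (hc : Multiset.card (normalizedFactors (Ideal.span {c})) < p ^ e) :
    Module.IsTorsionFree R (Frob R p e ⧸ LinearMap.range (lambdaMap R p e c)) := by
  refine .of_smul_eq_zero fun a z hz => ?_
  rcases eq_or_ne a 0 with rfl | ha
  · exact .inl rfl
  obtain ⟨x, rfl⟩ := Submodule.Quotient.mk_surjective _ z
  rw [← Submodule.Quotient.mk_smul, Submodule.Quotient.mk_eq_zero] at hz
  obtain ⟨b, hb⟩ := hz
  obtain ⟨d, hd⟩ :=
    IsDedekindDomain.exists_eq_pow_mul_of_pow_mul_eq_pow_mul (x := Frob.toBase x) ha hc hb.symm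
  exact .inr ((Submodule.Quotient.mk_eq_zero _).mpr ⟨d, hd.symm⟩)

end lambdaMap

/-- **Dedekind domains of prime characteristic are F-pure regular.**
Let `R` be a Dedekind domain of prime characteristic `p`.  Then for every nonzero `c ∈ R`
there exists `e ≥ 1` such that the `R`-linear map `λ^e_c : R → F^e_* R`, sending `1` to `c`,
is a pure map of `R`-modules. -/
theorem dedekind_domain_is_fpure_regular
    (p : ℕ) [Fact p.Prime]
    (R : Type u) [CommRing R] [IsDedekindDomain R] [CharP R p] :
    ∀ c : R, c ≠ 0 → ∃ e : ℕ, 1 ≤ e ∧ IsPure (lambdaMap R p e c) := by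
  intro c hc
  set n := Multiset.card (normalizedFactors (Ideal.span {c}))
  have hn : n < p ^ (n + 1) := n.lt_succ_self.trans (Nat.lt_pow_self (Fact.out : p.Prime).one_lt)
  have := isTorsionFree_cokernel_lambdaMap hn
  exact ⟨n + 1, Nat.le_add_left 1 n,
    isPure_of_injective_of_flat_cokernel (lambdaMap_injective (IsRegular.of_ne_zero hc).right)⟩
end

section
/- Let R be a commutative ring (not necessarily Noetherian) of prime characteristic p > 0. Then R is Frobenius split if and only if the canonical map R → R_perf to the perfect closure splits as a map of R-modules, i.e., there exists an R-linear map ψ : R_perf → R with ψ(1) = 1. In particular, if R is Frobenius split, then R_perf is a solid R-algebra. -/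
universe u

/-- The perfect closure of a ring of characteristic `p` is an algebra over that ring via the
canonical map. -/
noncomputable instance perfectClosureAlgebra (R : Type u) [CommRing R] (p : ℕ) [Fact p.Prime]
    [CharP R p] : Algebra R (PerfectClosure R p) :=
  (PerfectClosure.of R p).toAlgebra

section aux

variable {p : ℕ} [Fact p.Prime] {R : Type u} [CommRing R] [CharP R p]
variable (φ : R →+ R) (hφ : ∀ a x : R, φ (a ^ p * x) = a * φ x) (hφ1 : φ 1 = 1)

include hφ hφ1 in
lemma frobSplit_pow (x : R) : φ (x ^ p) = x := by
  have := hφ x 1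
  rwa [mul_one, hφ1, mul_one] at this

include hφ in
lemma frobSplit_iter (n : ℕ) (x y : R) :
    φ^[n] ((frobenius R p)^[n] x * y) = x * φ^[n] y := by
  induction n generalizing y with
  | zero => simp
  | succ n ih =>
    have h2 : (frobenius R p)^[n+1] x = ((frobenius R p)^[n] x) ^ p :=
      Function.iterate_succ_apply' _ n x
    calc (⇑φ)^[n+1] ((frobenius R p)^[n+1] x * y)
        = (⇑φ)^[n] (φ (((frobenius R p)^[n] x) ^ p * y)) := by
          rw [h2, Function.iterate_succ_apply]
      _ = (⇑φ)^[n] ((frobenius R p)^[n] x * φ y) := by rw [hφ]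
      _ = x * (⇑φ)^[n] (φ y) := ih (φ y)
      _ = x * (⇑φ)^[n+1] y := by rw [Function.iterate_succ_apply]

include hφ1 in
lemma frobSplit_iter_one (n : ℕ) : φ^[n] 1 = 1 := by
  induction n with
  | zero => rfl
  | succ n ih => rw [Function.iterate_succ_apply, hφ1, ih]

end aux

/-- **Frobenius splitting is equivalent to splitting of the perfect closure.**
Let `R` be a commutative ring (not necessarily Noetherian) of prime characteristic `p`.  Then
`R` is Frobenius split (there is an additive map `φ : R → R` with `φ (a ^ p * x) = a * φ x`
and `φ 1 = 1`) if and only if the canonical map `R → R_perf` splits as a map of `R`-modules,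
i.e. there is an `R`-linear map `ψ : R_perf → R` with `ψ 1 = 1`.  In particular, if `R` is
Frobenius split, then `R_perf` is a solid `R`-algebra. -/
theorem frobenius_split_iff_perfectClosure_splits
    (p : ℕ) [Fact p.Prime] (R : Type u) [CommRing R] [CharP R p] :
    ((∃ φ : R →+ R, (∀ a x : R, φ (a ^ p * x) = a * φ x) ∧ φ 1 = 1) ↔
      (∃ ψ : PerfectClosure R p →ₗ[R] R, ψ 1 = 1)) ∧
    ((∃ φ : R →+ R, (∀ a x : R, φ (a ^ p * x) = a * φ x) ∧ φ 1 = 1) →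
      ∃ f : PerfectClosure R p →ₗ[R] R, f ≠ 0) := by
  have main : (∃ φ : R →+ R, (∀ a x : R, φ (a ^ p * x) = a * φ x) ∧ φ 1 = 1) ↔
      (∃ ψ : PerfectClosure R p →ₗ[R] R, ψ 1 = 1) := by
    constructor
    · rintro ⟨φ, hφ, hφ1⟩
      -- define ψ on representatives by (n, x) ↦ φ^[n] x
      have hresp : ∀ x y : ℕ × R, PerfectClosure.R R p x y →
          (fun q : ℕ × R => φ^[q.1] q.2) x = (fun q : ℕ × R => φ^[q.1] q.2) y := by
        rintro _ _ ⟨n, x⟩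
        simp only
        rw [Function.iterate_succ_apply]
        have : frobenius R p x = x ^ p := rfl
        rw [this, frobSplit_pow φ hφ hφ1]
      set ψ0 : PerfectClosure R p → R := fun z => z.liftOn (fun q => φ^[q.1] q.2) hresp with hψ0
      have hmk : ∀ q : ℕ × R, ψ0 (PerfectClosure.mk R p q) = φ^[q.1] q.2 := fun q => rfl
      have hiter : ∀ (n : ℕ) (x : R), φ^[n] ((frobenius R p)^[n] x) = x := by
        intro n x
        have := frobSplit_iter φ hφ n x 1
        rwa [mul_one, frobSplit_iter_one φ hφ1, mul_one] at this
      have hadd : ∀ a b, ψ0 (a + b) = ψ0 a + ψ0 b := by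
        intro a b
        induction a using PerfectClosure.induction_on with | h a =>
        induction b using PerfectClosure.induction_on with | h b =>
        obtain ⟨n, x⟩ := a; obtain ⟨m, y⟩ := b
        rw [PerfectClosure.mk_add_mk, hmk, hmk, hmk]
        simp only
        rw [iterate_map_add]
        congr 1
        · rw [Function.iterate_add_apply, hiter m x]
        · rw [show n + m = m + n from Nat.add_comm n m, Function.iterate_add_apply,
            hiter n y]
      have hsmul : ∀ (r : R) a, ψ0 (r • a) = r * ψ0 a := by
        intro r a
        induction a using PerfectClosure.induction_on with | h a =>
        obtain ⟨n, x⟩ := a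
        have hsm : r • PerfectClosure.mk R p (n, x) =
            PerfectClosure.of R p r * PerfectClosure.mk R p (n, x) := rfl
        rw [hsm, PerfectClosure.of_apply, PerfectClosure.mk_mul_mk]
        simp only [Nat.zero_add, Function.iterate_zero, id_eq]
        rw [hmk, hmk]
        simp only
        exact frobSplit_iter φ hφ n r x
      refine ⟨{ toFun := ψ0,
                map_add' := hadd,
                map_smul' := by intro r a; simpa using hsmul r a }, ?_⟩
      show ψ0 1 = 1
      rw [PerfectClosure.one_def, hmk]
      rfl
    · rintro ⟨ψ, hψ1⟩
      have hmul : ∀ (a : R) (z : PerfectClosure R p),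
          PerfectClosure.of R p a * z = a • z := fun _ _ => rfl
      refine ⟨{ toFun := fun x => ψ (PerfectClosure.mk R p (1, x)),
                map_zero' := ?_, map_add' := ?_ }, ?_, ?_⟩
      · have h := PerfectClosure.mk_succ_pow R p 0 (0 : R)
        rw [zero_pow (Fact.out : p.Prime).ne_zero] at h
        show ψ (PerfectClosure.mk R p (1, (0 : R))) = 0
        rw [h, ← PerfectClosure.zero_def, map_zero]
      · intro x y
        show ψ _ = ψ _ + ψ _
        rw [← map_add]
        congr 1
        rw [PerfectClosure.mk_add_mk]
        simp only [Function.iterate_one]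
        rw [← map_add (frobenius R p)]
        have : frobenius R p (x + y) = (x + y) ^ p := rfl
        rw [this]
        exact (PerfectClosure.mk_succ_pow R p 1 (x + y)).symm
      · intro a x
        show ψ _ = a * ψ _
        have : PerfectClosure.mk R p (1, a ^ p * x) =
            a • PerfectClosure.mk R p (1, x) := by
          rw [← hmul, PerfectClosure.of_apply, PerfectClosure.mk_mul_mk]
          simp only [Nat.zero_add, Function.iterate_zero, id_eq, Function.iterate_one]
          rfl
        rw [this, map_smul, smul_eq_mul]
      · show ψ (PerfectClosure.mk R p (1, (1 : R))) = 1
        have h := PerfectClosure.mk_succ_pow R p 0 (1 : R)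
        rw [one_pow] at h
        rw [h, ← PerfectClosure.one_def, hψ1]
  refine ⟨main, ?_⟩
  intro h
  obtain ⟨ψ, hψ1⟩ := main.mp h
  refine ⟨ψ, fun hzero => ?_⟩
  have h1 : (1 : R) = 0 := by rw [← hψ1, hzero]; rfl
  have : ((1 : ℕ) : R) = 0 := by simpa using h1
  have hdvd : p ∣ 1 := (CharP.cast_eq_zero_iff R p 1).mp this
  exact (Fact.out : p.Prime).ne_one (Nat.dvd_one.mp hdvd)
end
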